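/- Affine closure commutes with existential quantification over a variable: for any set M ⊆ 𝔽₂ⁿ and any coordinate v, aff(∃v M) = ∃v (aff(M)), where ∃v S = {ν | ν ∈ S ∨ ν + e_v ∈ S} and aff denotes the smallest superset closed under ternary XOR. -/

import Mathlib

def aff {n : ℕ} (M : Set (Fin n → ZMod 2)) : Set (Fin n → ZMod 2) :=
  ⋂₀ {S | M ⊆ S ∧ ∀ μ₁ ∈ S, ∀ μ₂ ∈ S, ∀ μ₃ ∈ S, μ₁ + μ₂ + μ₃ ∈ S}

def exQ {n : ℕ} (v : Fin n) (S : Set (Fin n → ZMod 2)) : Set (Fin n → ZMod 2) :=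
  {ν | ν ∈ S ∨ ν + Pi.single v 1 ∈ S}

/-!
Write `ν ∈ exQ v S` as `ν + k • e_v ∈ S` for some `k ∈ 𝔽₂`. Ternary sums add up the shifts `k`,
so `exQ v (aff M)` is closed and hence contains `aff (exQ v M)`. Conversely, in characteristic two
translation by `k • e_v` commutes with ternary sums, so it maps `aff M` into the affine closure of
the translate of `M`, which lies in `exQ v M`.
-/

def TernaryClosed {α : Type*} [Add α] (S : Set α) : Prop :=
  ∀ μ₁ ∈ S, ∀ μ₂ ∈ S, ∀ μ₃ ∈ S, μ₁ + μ₂ + μ₃ ∈ S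

variable {n : ℕ}

section aff

theorem subset_aff (M : Set (Fin n → ZMod 2)) : M ⊆ aff M :=
  fun _ hx => Set.mem_sInter.2 fun _ hS => hS.1 hx

theorem ternaryClosed_aff (M : Set (Fin n → ZMod 2)) : TernaryClosed (aff M) :=
  fun _ ha _ hb _ hc => Set.mem_sInter.2 fun S hS =>
    hS.2 _ (Set.mem_sInter.1 ha S hS) _ (Set.mem_sInter.1 hb S hS) _ (Set.mem_sInter.1 hc S hS)

theorem aff_subset_of_ternaryClosed {M S : Set (Fin n → ZMod 2)} (hMS : M ⊆ S)
    (hS : TernaryClosed S) : aff M ⊆ S :=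
  fun _ hx => Set.mem_sInter.1 hx S ⟨hMS, hS⟩

theorem aff_mono {M N : Set (Fin n → ZMod 2)} (h : M ⊆ N) : aff M ⊆ aff N :=
  aff_subset_of_ternaryClosed (h.trans (subset_aff N)) (ternaryClosed_aff N)

theorem mapsTo_aff {f : (Fin n → ZMod 2) → Fin n → ZMod 2}
    (hf : ∀ a b c, f (a + b + c) = f a + f b + f c) (M : Set (Fin n → ZMod 2)) :
    Set.MapsTo f (aff M) (aff (f '' M)) :=
  aff_subset_of_ternaryClosed (fun x hx => subset_aff _ ⟨x, hx, rfl⟩) fun a ha b hb c hc => by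
    show f (a + b + c) ∈ aff (f '' M)
    rw [hf]
    exact ternaryClosed_aff _ _ ha _ hb _ hc

end aff

section zmodTwo

variable {ι : Type*}

theorem add_self_eq_zero_of_zmod_two (x : ι → ZMod 2) : x + x = 0 :=
  funext fun i => CharTwo.add_self_eq_zero (x i)

theorem add_add_self_of_zmod_two (x t : ι → ZMod 2) : x + t + t = x := by
  rw [add_assoc, add_self_eq_zero_of_zmod_two, add_zero]

theorem add_add_add_right_of_zmod_two (a b c t : ι → ZMod 2) :
    a + b + c + t = a + t + (b + t) + (c + t) := by
  rw [show a + t + (b + t) + (c + t) = a + b + c + t + (t + t) by abel,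
    add_self_eq_zero_of_zmod_two, add_zero]

end zmodTwo

section exQ

theorem mem_exQ_iff {v : Fin n} {S : Set (Fin n → ZMod 2)} {x : Fin n → ZMod 2} :
    x ∈ exQ v S ↔ ∃ k : ZMod 2, x + Pi.single v k ∈ S := by
  constructor
  · rintro (h | h)
    · exact ⟨0, by simpa using h⟩
    · exact ⟨1, h⟩
  · rintro ⟨k, hk⟩
    obtain rfl | rfl := (by decide : ∀ k : ZMod 2, k = 0 ∨ k = 1) k
    · exact Or.inl (by simpa using hk)
    · exact Or.inr hk

theorem exQ_mono (v : Fin n) {S T : Set (Fin n → ZMod 2)} (h : S ⊆ T) : exQ v S ⊆ exQ v T :=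
  fun _ => Or.imp (@h _) (@h _)

theorem TernaryClosed.exQ {S : Set (Fin n → ZMod 2)} (hS : TernaryClosed S) (v : Fin n) :
    TernaryClosed (exQ v S) := by
  intro a ha b hb c hc
  obtain ⟨ka, ha⟩ := mem_exQ_iff.1 ha
  obtain ⟨kb, hb⟩ := mem_exQ_iff.1 hb
  obtain ⟨kc, hc⟩ := mem_exQ_iff.1 hc
  refine mem_exQ_iff.2 ⟨ka + kb + kc, ?_⟩
  convert hS _ ha _ hb _ hc using 1
  simp only [Pi.single_add]
  abel

theorem image_add_single_subset_exQ (v : Fin n) (k : ZMod 2) (S : Set (Fin n → ZMod 2)) :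
    (· + Pi.single v k) '' S ⊆ exQ v S := by
  rintro _ ⟨x, hx, rfl⟩
  exact mem_exQ_iff.2 ⟨k, by rwa [add_add_self_of_zmod_two]⟩

theorem mem_aff_exQ_of_add_single_mem {M : Set (Fin n → ZMod 2)} {v : Fin n} {k : ZMod 2}
    {x : Fin n → ZMod 2} (hx : x + Pi.single v k ∈ aff M) : x ∈ aff (exQ v M) := by
  have hshift : x + Pi.single v k + Pi.single v k ∈ aff ((· + Pi.single v k) '' M) :=
    mapsTo_aff (fun a b c => add_add_add_right_of_zmod_two a b c _) M hx
  rw [add_add_self_of_zmod_two] at hshift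
  exact aff_mono (image_add_single_subset_exQ v k M) hshift

end exQ

theorem stmt5 {n : ℕ} (M : Set (Fin n → ZMod 2)) (v : Fin n) :
    aff (exQ v M) = exQ v (aff M) := by
  refine (aff_subset_of_ternaryClosed (exQ_mono v (subset_aff M))
    ((ternaryClosed_aff M).exQ v)).antisymm fun x hx => ?_
  obtain ⟨k, hk⟩ := mem_exQ_iff.1 hx
  exact mem_aff_exQ_of_add_single_mem hk
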